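/- Suboptimality bound via squared Bellman residuals: In a finite-horizon MDP with horizon H, let {f̂_h}_{h=1}^H be arbitrary functions S×A → ℝ with f̂_{H+1} ≡ 0, and let π_{f̂} be the greedy policy with respect to f̂. Define Δ_h(f,g)(s,a) = (f(s,a) − (T_h g)(s,a))², where (T_h g)(s,a) = r_h(s,a) + E_{s'∼P_h(·|s,a)}[max_{a'} g(s',a')]. Then for any start state x, V_1^*(x) − V_1^{π_{f̂}}(x) ≤ √H · ( √( E_{π*}[ Σ_{h=1}^H Δ_h(f̂_h, f̂_{h+1})(s_h,a_h) | s_1=x ] ) + √( E_{π_{f̂}}[ Σ_{h=1}^H Δ_h(f̂_h, f̂_{h+1})(s_h,a_h) | s_1=x ] ) ), where π* is an optimal policy and V_1* is the optimal value function. -/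
import Mathlib


open Finset

/-- Expected cumulative value of a deterministic policy `σ`, by recursion on the
number of remaining steps: `cumD P σ F n h s = E_σ[Σ_{t=h}^{h+n-1} F_t(s_t,a_t) | s_h = s]`. -/
noncomputable def cumD {S A : Type*} [Fintype S]
    (P : ℕ → S → A → S → ℝ) (σ : ℕ → S → A) (F : ℕ → S → A → ℝ) :
    ℕ → ℕ → S → ℝ
  | 0, _, _ => 0
  | (n + 1), h, s =>
      F h s (σ h s) + ∑ s', P h s (σ h s) s' * cumD P σ F n (h + 1) s'

/-- Optimal value function by backward (Bellman optimality) recursion, with the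
first argument the number of remaining steps: `Vopt P r n h s = V_h^*(s)` when
`n` steps remain. -/
noncomputable def Vopt {S A : Type*} [Fintype S] [Fintype A] [Nonempty A]
    (P : ℕ → S → A → S → ℝ) (r : ℕ → S → A → ℝ) :
    ℕ → ℕ → S → ℝ
  | 0, _, _ => 0
  | (n + 1), h, s =>
      Finset.univ.sup' Finset.univ_nonempty
        (fun a => r h s a + ∑ s', P h s a s' * Vopt P r n (h + 1) s')

section aux

variable {S A : Type*} [Fintype S]

lemma cumD_congr (P : ℕ → S → A → S → ℝ) (σ : ℕ → S → A)
    {F G : ℕ → S → A → ℝ} (hFG : ∀ h s a, F h s a = G h s a) :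
    ∀ n h s, cumD P σ F n h s = cumD P σ G n h s
  | 0, _, _ => rfl
  | (n+1), h, s => by
      simp only [cumD, hFG]
      congr 1
      refine Finset.sum_congr rfl fun s' _ => ?_
      rw [cumD_congr P σ hFG n (h+1) s']

lemma cumD_mono (P : ℕ → S → A → S → ℝ) (hP0 : ∀ h s a s', 0 ≤ P h s a s')
    (σ : ℕ → S → A) {F G : ℕ → S → A → ℝ} (hFG : ∀ h s a, F h s a ≤ G h s a) :
    ∀ n h s, cumD P σ F n h s ≤ cumD P σ G n h s
  | 0, _, _ => le_refl 0
  | (n+1), h, s => by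
      simp only [cumD]
      refine add_le_add (hFG _ _ _) (Finset.sum_le_sum fun s' _ => ?_)
      exact mul_le_mul_of_nonneg_left (cumD_mono P hP0 σ hFG n (h+1) s') (hP0 _ _ _ _)

lemma cumD_zero (P : ℕ → S → A → S → ℝ) (σ : ℕ → S → A) :
    ∀ n h s, cumD P σ (fun _ _ _ => (0:ℝ)) n h s = 0
  | 0, _, _ => rfl
  | (n+1), h, s => by
      simp only [cumD]
      simp [fun s' => cumD_zero P σ n (h+1) s']

lemma cumD_nonneg (P : ℕ → S → A → S → ℝ) (hP0 : ∀ h s a s', 0 ≤ P h s a s')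
    (σ : ℕ → S → A) {F : ℕ → S → A → ℝ} (hF : ∀ h s a, 0 ≤ F h s a)
    (n h : ℕ) (s : S) : 0 ≤ cumD P σ F n h s := by
  have := cumD_mono P hP0 σ (F := fun _ _ _ => (0:ℝ)) (G := F) hF n h s
  rwa [cumD_zero] at this

lemma cumD_neg (P : ℕ → S → A → S → ℝ) (σ : ℕ → S → A) (F : ℕ → S → A → ℝ) :
    ∀ n h s, cumD P σ (fun h s a => -(F h s a)) n h s = -cumD P σ F n h s
  | 0, _, _ => by simp [cumD]
  | (n+1), h, s => by
      simp only [cumD, fun s' => cumD_neg P σ F n (h+1) s', mul_neg]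
      rw [Finset.sum_neg_distrib]
      ring

/-- Cauchy–Schwarz / Jensen: `(E[Σ F])² ≤ n · E[Σ F²]`. -/
lemma cumD_sq_le (P : ℕ → S → A → S → ℝ) (hP0 : ∀ h s a s', 0 ≤ P h s a s')
    (hP1 : ∀ h s a, ∑ s', P h s a s' = 1) (σ : ℕ → S → A) (F : ℕ → S → A → ℝ) :
    ∀ n h s, (cumD P σ F n h s) ^ 2 ≤ n * cumD P σ (fun h s a => (F h s a) ^ 2) n h s
  | 0, _, _ => by simp [cumD]
  | (n+1), h, s => by
      rcases Nat.eq_zero_or_pos n with hn | hn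
      · subst hn
        simp [cumD]
      · simp only [cumD]
        set a : ℝ := F h s (σ h s) with ha
        set p : S → ℝ := fun s' => P h s (σ h s) s' with hp
        set c : S → ℝ := fun s' => cumD P σ F n (h+1) s' with hc
        set D : S → ℝ := fun s' => cumD P σ (fun h s a => (F h s a) ^ 2) n (h+1) s' with hD
        have hcs : (∑ s', p s' * c s') ^ 2 ≤ ∑ s', p s' * (c s') ^ 2 := by
          have key := Finset.sum_mul_sq_le_sq_mul_sq Finset.univ
            (fun s' => Real.sqrt (p s')) (fun s' => Real.sqrt (p s') * c s')
          have e1 : ∀ s' : S, Real.sqrt (p s') * (Real.sqrt (p s') * c s') = p s' * c s' := by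
            intro s'
            rw [← mul_assoc, Real.mul_self_sqrt (hP0 _ _ _ _)]
          have e2 : ∀ s' : S, (Real.sqrt (p s')) ^ 2 = p s' := fun s' =>
            Real.sq_sqrt (hP0 _ _ _ _)
          have e3 : ∀ s' : S, (Real.sqrt (p s') * c s') ^ 2 = p s' * (c s') ^ 2 := by
            intro s'
            rw [mul_pow, e2]
          simp only [e1, e2, e3] at key
          rwa [hP1, one_mul] at key
        have hih : ∀ s' : S, (c s') ^ 2 ≤ n * D s' := fun s' =>
          cumD_sq_le P hP0 hP1 σ F n (h+1) s'
        have hbD : (∑ s', p s' * c s') ^ 2 ≤ (n : ℝ) * ∑ s', p s' * D s' := by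
          refine hcs.trans ?_
          rw [Finset.mul_sum]
          refine Finset.sum_le_sum fun s' _ => ?_
          calc p s' * (c s') ^ 2 ≤ p s' * (n * D s') :=
                mul_le_mul_of_nonneg_left (hih s') (hP0 _ _ _ _)
            _ = n * (p s' * D s') := by ring
        have hn' : (1:ℝ) ≤ (n:ℝ) := by exact_mod_cast hn
        set b : ℝ := ∑ s', p s' * c s' with hb
        set Dt : ℝ := ∑ s', p s' * D s' with hDt
        have key : (n:ℝ) * (a + b) ^ 2 ≤ (n:ℝ) * (((n:ℕ) + 1 : ℝ) * (a ^ 2 + Dt)) := by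
          nlinarith [sq_nonneg ((n:ℝ) * a - b), hbD,
            mul_nonneg (sub_nonneg.mpr hbD) (sub_nonneg.mpr hn')]
        have hpos : (0:ℝ) < (n:ℝ) := by exact_mod_cast hn
        have main := le_of_mul_le_mul_left key hpos
        push_cast at main ⊢
        linarith

end aux

section aux2

variable {S A : Type*} [Fintype S] [Fintype A] [Nonempty A]

/-- Claim 1: for any policy, `E[Σ r] - f_h(s, π_h(s)) ≤ E[Σ e]`. -/
lemma cumD_r_sub_f_le (P : ℕ → S → A → S → ℝ) (hP0 : ∀ h s a s', 0 ≤ P h s a s')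
    (r f : ℕ → S → A → ℝ) (H : ℕ) (hfend : ∀ s a, f (H + 1) s a = 0)
    (π : ℕ → S → A) (e : ℕ → S → A → ℝ)
    (he : ∀ h s a, e h s a = (r h s a + ∑ s', P h s a s' *
      Finset.univ.sup' Finset.univ_nonempty (fun a' => f (h + 1) s' a')) - f h s a) :
    ∀ n h, h + n = H + 1 → ∀ s,
      cumD P π r n h s - f h s (π h s) ≤ cumD P π e n h s := by
  intro n
  induction n with
  | zero =>
      intro h hh s
      simp only [Nat.add_zero] at hh
      subst hh
      simp [cumD, hfend]
  | succ n ih =>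
      intro h hh s
      have hh' : (h + 1) + n = H + 1 := by omega
      show cumD P π r (n+1) h s - f h s (π h s) ≤ cumD P π e (n+1) h s
      simp only [cumD]
      have hf : f h s (π h s) = (r h s (π h s) + ∑ s', P h s (π h s) s' *
          Finset.univ.sup' Finset.univ_nonempty (fun a' => f (h + 1) s' a')) -
          e h s (π h s) := by
        rw [he]; ring
      rw [hf]
      have hsum : ∑ s', P h s (π h s) s' * cumD P π r n (h+1) s' -
          ∑ s', P h s (π h s) s' *
            Finset.univ.sup' Finset.univ_nonempty (fun a' => f (h + 1) s' a')
          ≤ ∑ s', P h s (π h s) s' * cumD P π e n (h+1) s' := by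
        rw [← Finset.sum_sub_distrib]
        refine Finset.sum_le_sum fun s' _ => ?_
        rw [← mul_sub]
        refine mul_le_mul_of_nonneg_left ?_ (hP0 _ _ _ _)
        have h1 : f (h+1) s' (π (h+1) s') ≤
            Finset.univ.sup' Finset.univ_nonempty (fun a' => f (h + 1) s' a') :=
          Finset.le_sup' _ (Finset.mem_univ _)
        have h2 := ih (h+1) hh' s'
        linarith
      linarith

/-- Claim 2: for the greedy policy, equality. -/
lemma cumD_r_sub_f_greedy (P : ℕ → S → A → S → ℝ)
    (r f : ℕ → S → A → ℝ) (H : ℕ) (hfend : ∀ s a, f (H + 1) s a = 0)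
    (σ : ℕ → S → A) (hgreedy : ∀ h s a, f h s a ≤ f h s (σ h s))
    (e : ℕ → S → A → ℝ)
    (he : ∀ h s a, e h s a = (r h s a + ∑ s', P h s a s' *
      Finset.univ.sup' Finset.univ_nonempty (fun a' => f (h + 1) s' a')) - f h s a) :
    ∀ n h, h + n = H + 1 → ∀ s,
      cumD P σ r n h s - f h s (σ h s) = cumD P σ e n h s := by
  have hM : ∀ h s, Finset.univ.sup' Finset.univ_nonempty (fun a' => f h s a') =
      f h s (σ h s) := by
    intro h s
    exact le_antisymm (Finset.sup'_le _ _ fun a _ => hgreedy h s a)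
      (Finset.le_sup' _ (Finset.mem_univ _))
  intro n
  induction n with
  | zero =>
      intro h hh s
      simp only [Nat.add_zero] at hh
      subst hh
      simp [cumD, hfend]
  | succ n ih =>
      intro h hh s
      have hh' : (h + 1) + n = H + 1 := by omega
      show cumD P σ r (n+1) h s - f h s (σ h s) = cumD P σ e (n+1) h s
      simp only [cumD]
      have hf : f h s (σ h s) = (r h s (σ h s) + ∑ s', P h s (σ h s) s' *
          Finset.univ.sup' Finset.univ_nonempty (fun a' => f (h + 1) s' a')) -
          e h s (σ h s) := by
        rw [he]; ring
      rw [hf]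
      have hsum : ∑ s', P h s (σ h s) s' * cumD P σ r n (h+1) s' -
          ∑ s', P h s (σ h s) s' *
            Finset.univ.sup' Finset.univ_nonempty (fun a' => f (h + 1) s' a')
          = ∑ s', P h s (σ h s) s' * cumD P σ e n (h+1) s' := by
        rw [← Finset.sum_sub_distrib]
        refine Finset.sum_congr rfl fun s' _ => ?_
        rw [← mul_sub, hM (h+1) s', ih (h+1) hh' s']
      linarith

end aux2

/-- suboptimality bound via squared Bellman residuals:
`V_1^*(x) − V_1^{π_{f̂}}(x) ≤ √H (√E_{π*}[Σ_h Δ_h] + √E_{π_{f̂}}[Σ_h Δ_h])`. -/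
theorem suboptimality_bound_squared_bellman_residuals
    {S A : Type*} [Fintype S] [Fintype A] [Nonempty A]
    (H : ℕ) (hH : 1 ≤ H)
    (P : ℕ → S → A → S → ℝ) (hP0 : ∀ h s a s', 0 ≤ P h s a s')
    (hP1 : ∀ h s a, ∑ s', P h s a s' = 1)
    (r : ℕ → S → A → ℝ) (hr0 : ∀ h s a, 0 ≤ r h s a) (hr1 : ∀ h s a, r h s a ≤ 1)
    (f : ℕ → S → A → ℝ) (hfend : ∀ s a, f (H + 1) s a = 0)
    -- greedy policy w.r.t. f̂
    (σ : ℕ → S → A) (hgreedy : ∀ h s a, f h s a ≤ f h s (σ h s))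
    -- π* is an optimal policy: its value function equals the optimal value
    (πstar : ℕ → S → A) (hopt : ∀ y, cumD P πstar r H 1 y = Vopt P r H 1 y)
    -- the squared Bellman residual Δ_h(f̂_h, f̂_{h+1})(s,a)
    (Δ : ℕ → S → A → ℝ)
    (hΔ : ∀ h s a, Δ h s a =
      (f h s a - (r h s a + ∑ s', P h s a s' *
        Finset.univ.sup' Finset.univ_nonempty (fun a' => f (h + 1) s' a'))) ^ 2)
    (x : S) :
    Vopt P r H 1 x - cumD P σ r H 1 x
      ≤ Real.sqrt H *
        (Real.sqrt (cumD P πstar Δ H 1 x) + Real.sqrt (cumD P σ Δ H 1 x)) := by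
  -- the Bellman residual
  set e : ℕ → S → A → ℝ := fun h s a => (r h s a + ∑ s', P h s a s' *
      Finset.univ.sup' Finset.univ_nonempty (fun a' => f (h + 1) s' a')) - f h s a with he
  have he' : ∀ h s a, e h s a = (r h s a + ∑ s', P h s a s' *
      Finset.univ.sup' Finset.univ_nonempty (fun a' => f (h + 1) s' a')) - f h s a :=
    fun h s a => rfl
  have hΔe : ∀ h s a, Δ h s a = (|e h s a|) ^ 2 := by
    intro h s a
    rw [hΔ, sq_abs, he']
    ring
  -- |e|-cumulants bound the Δ-cumulants as squares
  have habs : ∀ π : ℕ → S → A,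
      cumD P π (fun h s a => |e h s a|) H 1 x ≤
      Real.sqrt H * Real.sqrt (cumD P π Δ H 1 x) := by
    intro π
    have hsq := cumD_sq_le P hP0 hP1 π (fun h s a => |e h s a|) H 1 x
    have hcong : cumD P π (fun h s a => (|e h s a|) ^ 2) H 1 x =
        cumD P π Δ H 1 x :=
      cumD_congr P π (fun h s a => (hΔe h s a).symm) H 1 x
    rw [hcong] at hsq
    have hnn : 0 ≤ cumD P π (fun h s a => |e h s a|) H 1 x :=
      cumD_nonneg P hP0 π (fun h s a => abs_nonneg _) H 1 x
    have hΔnn : 0 ≤ cumD P π Δ H 1 x :=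
      cumD_nonneg P hP0 π (fun h s a => by rw [hΔe]; positivity) H 1 x
    have : cumD P π (fun h s a => |e h s a|) H 1 x ≤
        Real.sqrt ((H : ℝ) * cumD P π Δ H 1 x) := by
      rw [show cumD P π (fun h s a => |e h s a|) H 1 x =
          Real.sqrt ((cumD P π (fun h s a => |e h s a|) H 1 x) ^ 2) from
          (Real.sqrt_sq hnn).symm]
      exact Real.sqrt_le_sqrt hsq
    rwa [Real.sqrt_mul (by positivity)] at this
  -- the two telescoping claims
  have hc1 := cumD_r_sub_f_le P hP0 r f H hfend πstar e he' H 1 (by omega) x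
  have hc2 := cumD_r_sub_f_greedy P r f H hfend σ hgreedy e he' H 1 (by omega) x
  -- e ≤ |e| for πstar; -e ≤ |e| for σ
  have hm1 : cumD P πstar e H 1 x ≤ cumD P πstar (fun h s a => |e h s a|) H 1 x :=
    cumD_mono P hP0 πstar (fun h s a => le_abs_self _) H 1 x
  have hm2 : -cumD P σ e H 1 x ≤ cumD P σ (fun h s a => |e h s a|) H 1 x := by
    rw [← cumD_neg P σ e]
    exact cumD_mono P hP0 σ (F := fun h s a => -(e h s a))
      (G := fun h s a => |e h s a|) (fun h s a => neg_le_abs _) H 1 x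
  have hg : f 1 x (πstar 1 x) ≤ f 1 x (σ 1 x) := hgreedy 1 x _
  have h1 := habs πstar
  have h2 := habs σ
  have hopt' := hopt x
  nlinarith [h1, h2, hm1, hm2, hc1, hc2, hg]
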